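/- Fix n ≥ 3 and let A be the cycle compartmental matrix in the parameters a_{01}, a_{21}, a_{32}, …, a_{n,n−1}, a_{1n}, and let A_{11} be A with its first row and column deleted. Then, as polynomials in λ with coefficients in the polynomial ring in the parameters, det(λI − A) = (λ + a_{01} + a_{21}) · det(λI − A_{11}) − a_{21} · a_{32}a_{43}⋯a_{n,n−1}a_{1n}, and moreover det(λI − A_{11}) = (λ + a_{32})(λ + a_{43})⋯(λ + a_{n,n−1})(λ + a_{1n}). -/

import Mathlib

open Polynomial

/-- Index `i : Fin (m+3)` recast in `Fin (m+2)` as `i - 1`. -/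
def subOne' {m : ℕ} (i : Fin (m + 3)) : Fin (m + 2) :=
  ⟨i.val - 1, by have := i.isLt; omega⟩

/-- The cycle compartmental matrix with `n = m + 3` compartments
(`b k = a_{k+3,k+2}` for `k ≤ m`, `b (m+1) = a_{1n}`). -/
def cycMatrix {R : Type*} [CommRing R] (m : ℕ) (a01 a21 : R) (b : Fin (m + 2) → R) :
    Matrix (Fin (m + 3)) (Fin (m + 3)) R :=
  Matrix.of fun i j =>
    if i = 0 ∧ j = 0 then -a01 - a21
    else if i = 0 ∧ j.val = m + 2 then b (Fin.last (m + 1))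
    else if i.val = j.val + 1 then (if j = 0 then a21 else b (subOne' j))
    else if i = j then -(b (subOne' i))
    else 0

/-!
The cycle matrix `A` is upper Hessenberg and its first row is supported on the first and last
columns. Expanding `det (λI - A)` along the first row therefore gives two terms: the corner
entry times the principal minor `det (λI - A₁₁)`, and the last entry `a_{1n}` times the minor
obtained by deleting the first row and the last column, which is upper triangular with the
subdiagonal `-a₂₁, -a₃₂, …, -a_{n,n-1}` of `A` on its diagonal. The minor `A₁₁` itself is
lower triangular with diagonal `-a₃₂, …, -a_{n,n-1}, -a_{1n}`.
-/

namespace Matrix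

variable {R : Type*} [CommRing R]

theorem charpoly_of_isLowerTriangular {n : Type*} [Fintype n] [DecidableEq n] [LinearOrder n]
    (M : Matrix n n R) (h : M.IsLowerTriangular) :
    M.charpoly = ∏ i, (X - C (M i i)) :=
  (charpoly_transpose M).symm.trans (charpoly_of_isUpperTriangular _ h.transpose)

theorem charmatrix_submatrix {m n : Type*} [Fintype m] [DecidableEq m] [Fintype n]
    [DecidableEq n] (M : Matrix n n R) {e : m → n} (he : Function.Injective e) :
    (M.submatrix e e).charmatrix = M.charmatrix.submatrix e e := by
  ext i j : 1
  obtain rfl | hij := eq_or_ne i j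
  · simp only [charmatrix_apply_eq, submatrix_apply]
  · simp only [charmatrix_apply_ne _ _ _ hij, charmatrix_apply_ne _ _ _ (he.ne hij),
      submatrix_apply]

def IsUpperHessenberg {α : Type*} [Zero α] {n : ℕ} (M : Matrix (Fin n) (Fin n) α) : Prop :=
  ∀ i j : Fin n, j.val + 1 < i.val → M i j = 0

theorem IsUpperHessenberg.charmatrix {n : ℕ} {M : Matrix (Fin n) (Fin n) R}
    (hM : M.IsUpperHessenberg) : M.charmatrix.IsUpperHessenberg := fun i j hij => by
  rw [charmatrix_apply_ne _ _ _ (fun h => by subst h; omega), hM i j hij, map_zero, neg_zero]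

theorem IsUpperHessenberg.isUpperTriangular_submatrix_succ_castSucc {α : Type*} [Zero α]
    {n : ℕ} {M : Matrix (Fin (n + 1)) (Fin (n + 1)) α} (hM : M.IsUpperHessenberg) :
    (M.submatrix Fin.succ Fin.castSucc).IsUpperTriangular := fun i j (hji : j < i) =>
  hM _ _ (by simp only [Fin.val_succ, Fin.val_castSucc]; omega)

theorem det_succ_row_zero_of_eq_zero {n : ℕ} (M : Matrix (Fin (n + 2)) (Fin (n + 2)) R)
    (h : ∀ j, j ≠ 0 → j ≠ Fin.last (n + 1) → M 0 j = 0) :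
    M.det = M 0 0 * (M.submatrix Fin.succ Fin.succ).det
      + (-1) ^ (n + 1) * M 0 (Fin.last (n + 1)) * (M.submatrix Fin.succ Fin.castSucc).det := by
  rw [det_succ_row_zero, Fin.sum_univ_succ, Fin.sum_univ_castSucc,
    Finset.sum_eq_zero fun j _ => by
      rw [h _ (Fin.succ_ne_zero _) (Fin.succ_castSucc j ▸ (Fin.castSucc_lt_last _).ne),
        mul_zero, zero_mul]]
  simp [Fin.succAbove_last]

theorem IsUpperHessenberg.charpoly_of_row_zero {n : ℕ}
    {M : Matrix (Fin (n + 2)) (Fin (n + 2)) R}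
    (hM : M.IsUpperHessenberg) (h : ∀ j, j ≠ 0 → j ≠ Fin.last (n + 1) → M 0 j = 0) :
    M.charpoly = (X - C (M 0 0)) * (M.submatrix Fin.succ Fin.succ).charpoly
      - C (M 0 (Fin.last (n + 1)) * ∏ i : Fin (n + 1), M i.succ i.castSucc) := by
  have hsubdiag : (M.charmatrix.submatrix Fin.succ Fin.castSucc).det
      = (-1) ^ (n + 1) * C (∏ i : Fin (n + 1), M i.succ i.castSucc) := by
    rw [det_of_isUpperTriangular hM.charmatrix.isUpperTriangular_submatrix_succ_castSucc]
    calc ∏ i : Fin (n + 1), M.charmatrix i.succ i.castSucc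
        = ∏ i : Fin (n + 1), (-1) * C (M i.succ i.castSucc) :=
          Finset.prod_congr rfl fun i _ => by
            rw [charmatrix_apply_ne _ _ _ Fin.castSucc_lt_succ.ne', neg_one_mul]
      _ = _ := by
          rw [Finset.prod_mul_distrib, Finset.prod_const, Finset.card_univ, Fintype.card_fin,
            map_prod]
  have hsign : ((-1 : R[X]) ^ (n + 1)) ^ 2 = 1 := by
    rw [← pow_mul]
    exact Even.neg_one_pow ⟨n + 1, by ring⟩
  rw [charpoly, det_succ_row_zero_of_eq_zero _ fun j hj0 hjl => by
      rw [charmatrix_apply_ne _ _ _ (Ne.symm hj0), h j hj0 hjl, map_zero, neg_zero],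
    charmatrix_apply_eq, charmatrix_apply_ne _ _ _ (Fin.last_pos.ne), hsubdiag,
    charpoly, charmatrix_submatrix _ (Fin.succ_injective _), map_mul]
  linear_combination
    -(C (M 0 (Fin.last (n + 1))) * C (∏ i : Fin (n + 1), M i.succ i.castSucc)) * hsign

end Matrix

section CycMatrix

variable {R : Type*} [CommRing R] (m : ℕ) (a01 a21 : R) (b : Fin (m + 2) → R)

theorem cycMatrix_apply_zero_zero : cycMatrix m a01 a21 b 0 0 = -a01 - a21 := by
  simp only [cycMatrix, Matrix.of_apply, and_self, if_true]

theorem cycMatrix_apply_zero_last :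
    cycMatrix m a01 a21 b 0 (Fin.last (m + 2)) = b (Fin.last (m + 1)) := by
  simp only [cycMatrix, Matrix.of_apply, Fin.val_last, true_and, Fin.last_pos.ne', if_false,
    if_true]

theorem cycMatrix_apply_zero_of_ne {j : Fin (m + 3)} (hj0 : j ≠ 0) (hjl : j ≠ Fin.last (m + 2)) :
    cycMatrix m a01 a21 b 0 j = 0 := by
  have hjl' : j.val ≠ m + 2 := fun h => hjl (Fin.ext h)
  simp only [cycMatrix, Matrix.of_apply, hj0, hjl', true_and, if_false, Fin.val_zero]
  rw [if_neg (by omega), if_neg (Ne.symm hj0)]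

theorem cycMatrix_apply_one_zero : cycMatrix m a01 a21 b 1 0 = a21 := by
  simp [cycMatrix]

theorem cycMatrix_apply_succ_succ_castSucc (i : Fin (m + 1)) :
    cycMatrix m a01 a21 b i.succ.succ i.succ.castSucc = b i.castSucc := by
  simp only [cycMatrix, Matrix.of_apply, Fin.succ_ne_zero, false_and, if_false, Fin.val_succ,
    Fin.val_castSucc, if_true]
  rfl

theorem cycMatrix_apply_succ_succ (i : Fin (m + 2)) :
    cycMatrix m a01 a21 b i.succ i.succ = -b i := by
  simp only [cycMatrix, Matrix.of_apply, Fin.succ_ne_zero, false_and, if_false, Fin.val_succ,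
    if_true]
  rw [if_neg (by omega)]
  rfl

theorem cycMatrix_apply_succ_of_ne {i : Fin (m + 2)} {j : Fin (m + 3)} (h₁ : j ≠ i.succ)
    (h₂ : j ≠ i.castSucc) : cycMatrix m a01 a21 b i.succ j = 0 := by
  have h₂' : i.val ≠ j.val := fun h => h₂ (Fin.ext (by simp [h]))
  simp only [cycMatrix, Matrix.of_apply, Fin.succ_ne_zero, false_and, if_false, Fin.val_succ,
    Ne.symm h₁, add_left_inj, h₂']

theorem cycMatrix_isUpperHessenberg : (cycMatrix m a01 a21 b).IsUpperHessenberg := by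
  intro i j hij
  cases i using Fin.cases with
  | zero => simp at hij
  | succ i =>
    refine cycMatrix_apply_succ_of_ne m a01 a21 b ?_ ?_ <;>
    · rintro rfl; simp at hij

theorem cycMatrix_submatrix_succ_isLowerTriangular :
    ((cycMatrix m a01 a21 b).submatrix Fin.succ Fin.succ).IsLowerTriangular :=
  fun i j (hij : i < j) => cycMatrix_apply_succ_of_ne m a01 a21 b
    (Fin.succ_injective _ |>.ne hij.ne') (by simp [Fin.ext_iff]; omega)

theorem prod_cycMatrix_succ_castSucc :
    ∏ i : Fin (m + 2), cycMatrix m a01 a21 b i.succ i.castSucc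
      = a21 * ∏ i : Fin (m + 1), b i.castSucc := by
  rw [Fin.prod_univ_succ]
  simp only [Fin.succ_zero_eq_one, Fin.castSucc_zero, cycMatrix_apply_one_zero,
    cycMatrix_apply_succ_succ_castSucc]

end CycMatrix

/-- For the `n`-compartment cycle model (`n = m + 3 ≥ 3`), as
polynomials in `λ`,
`det (λI - A) = (λ + a₀₁ + a₂₁) · det (λI - A₁₁) - a₂₁ · a₃₂a₄₃⋯a_{n,n-1}a_{1n}` and
`det (λI - A₁₁) = (λ + a₃₂)(λ + a₄₃)⋯(λ + a_{n,n-1})(λ + a_{1n})`. -/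
theorem cyc_charpoly_factorization {R : Type*} [CommRing R] (m : ℕ) (a01 a21 : R)
    (b : Fin (m + 2) → R) :
    (cycMatrix m a01 a21 b).charpoly
        = (X + C a01 + C a21) * ((cycMatrix m a01 a21 b).submatrix Fin.succ Fin.succ).charpoly
          - C (a21 * ∏ k, b k) ∧
      ((cycMatrix m a01 a21 b).submatrix Fin.succ Fin.succ).charpoly
        = ∏ k, (X + C (b k)) := by
  constructor
  · rw [(cycMatrix_isUpperHessenberg m a01 a21 b).charpoly_of_row_zero
      fun j => cycMatrix_apply_zero_of_ne m a01 a21 b, cycMatrix_apply_zero_zero,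
      cycMatrix_apply_zero_last, prod_cycMatrix_succ_castSucc, Fin.prod_univ_castSucc b]
    simp only [map_sub, map_neg, map_mul]
    ring
  · rw [Matrix.charpoly_of_isLowerTriangular _
      (cycMatrix_submatrix_succ_isLowerTriangular m a01 a21 b)]
    simp only [Matrix.submatrix_apply, cycMatrix_apply_succ_succ, map_neg, sub_neg_eq_add]
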